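/- Let A = (E, ≤, ↗, λ) be an asymmetric event structure, X ⊆ E a combinable set of events, A/X its folding and f : E → E/X the folding morphism. Then causal chains are reflected by f: for every chain x1 ≤/X x2 ≤/X … ≤/X xk in E/X there exists a chain e1 ≤ e2 ≤ … ≤ ek in E with f(ei) = xi for every i ∈ {1, …, k}. -/

import Mathlib

/-- Restriction of a binary relation to a set. -/
def RelRestrict {G : Type*} (r : G → G → Prop) (S : Set G) : G → G → Prop :=
  fun a b => a ∈ S ∧ b ∈ S ∧ r a b

/-- A binary relation is acyclic on a set: there is no cycle lying within the set. -/
def AcyclicOn {G : Type*} (r : G → G → Prop) (S : Set G) : Prop :=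
  ∀ x, ¬ Relation.TransGen (RelRestrict r S) x x

/-- The data of a labelled asymmetric event structure (AES). -/
structure AES (E : Type*) (Λ : Type*) where
  le : E → E → Prop
  ac : E → E → Prop
  lab : E → Λ

namespace AES

variable {E : Type*} {Λ : Type*}

/-- Strict causality. -/
def lt (A : AES E Λ) (e e' : E) : Prop := A.le e e' ∧ e ≠ e'

/-- The set of causes `⌊e⌋`. -/
def causes (A : AES E Λ) (e : E) : Set E := {e' | A.le e' e}

/-- `⌊Y⌋`, the causes of a set of events. -/
def causesSet (A : AES E Λ) (Y : Set E) : Set E := ⋃ y ∈ Y, A.causes y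

/-- The axioms making the data an asymmetric event structure. -/
structure IsAES (A : AES E Λ) : Prop where
  le_refl : ∀ e, A.le e e
  le_trans : ∀ e e' e'', A.le e e' → A.le e' e'' → A.le e e''
  le_antisymm : ∀ e e', A.le e e' → A.le e' e → e = e'
  causes_finite : ∀ e, (A.causes e).Finite
  lt_ac : ∀ e e', A.lt e e' → A.ac e e'
  ac_heredity : ∀ e e' e'', A.ac e e' → A.lt e' e'' → A.ac e e''
  ac_acyclic : ∀ e, AcyclicOn A.ac (A.causes e)
  cyclic_ac : ∀ e e', ¬ AcyclicOn A.ac (A.causes e ∪ A.causes e') → A.ac e e'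

/-- Conflict on sets of events, inductively generated from cycles of asymmetric
conflict and closed under hereditarity along causality. -/
inductive SetConflict (A : AES E Λ) : Set E → Prop
  | cycle (e : E) (l : List E) : List.Chain A.ac e (l ++ [e]) →
      SetConflict A {x | x ∈ e :: l}
  | heredity (Y : Set E) (e e' : E) :
      SetConflict A (Y ∪ {e}) → A.le e e' → SetConflict A (Y ∪ {e'})

/-- Binary conflict `e # e'`. -/
def Conflict (A : AES E Λ) (e e' : E) : Prop := A.SetConflict {e, e'}

/-- A set of events is consistent if it contains no two events in conflict. -/
def ConsistentSet (A : AES E Λ) (Y : Set E) : Prop :=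
  ∀ e ∈ Y, ∀ e' ∈ Y, ¬ A.Conflict e e'

/-- Immediate causality `e' <_μ e`. -/
def ltMu (A : AES E Λ) (e' e : E) : Prop :=
  A.lt e' e ∧ ¬ ∃ e'', A.lt e' e'' ∧ A.lt e'' e

/-- Direct asymmetric conflict `e ↗_μ e''`. -/
def acMu (A : AES E Λ) (e e'' : E) : Prop :=
  A.ac e e'' ∧ ¬ ∃ e', A.ac e e' ∧ A.lt e' e''

/-- Direct binary conflict `e #_μ e'`. -/
def confMu (A : AES E Λ) (e e' : E) : Prop := A.acMu e e' ∧ A.acMu e' e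

/-- Configurations: finite, causally closed and free of asymmetric-conflict cycles. -/
def Config (A : AES E Λ) (C : Set E) : Prop :=
  C.Finite ∧ (∀ e ∈ C, A.causes e ⊆ C) ∧ AcyclicOn A.ac C

/-- Similar sets of events. -/
def Similar (A : AES E Λ) (X : Set E) : Prop :=
  ∀ e ∈ X, ∀ e' ∈ X,
    A.lab e = A.lab e' ∧ (e ≠ e' → A.Conflict e e') ∧
    ∀ e'', e'' ∉ X →
      (A.ac e e'' → (A.ac e' e'' ∨ A.ac e'' e)) ∧
      (A.acMu e'' e → A.ac e'' e')

/-- The strict causes `S(X)`. -/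
def strictCauses (A : AES E Λ) (X : Set E) : Set E := {e' | ∀ e ∈ X, A.lt e' e}

/-- The weak predecessors `W(X)`. -/
def weakPred (A : AES E Λ) (X : Set E) : Set E :=
  {e'' | ∃ e ∈ X, ∃ e' ∈ X, A.ac e'' e ∧ ¬ A.ac e' e''} \ (A.strictCauses X ∪ X)

/-- The history `C⟦e⟧` of `e` in a configuration `C`. -/
def history (A : AES E Λ) (C : Set E) (e : E) : Set E :=
  {e' | e' ∈ C ∧ Relation.ReflTransGen (RelRestrict A.ac C) e' e}

/-- The set of possible histories of `e`. -/
def Hist (A : AES E Λ) (e : E) : Set (Set E) :=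
  {h | ∃ C, A.Config C ∧ e ∈ C ∧ h = A.history C e}

/-- Combinable sets of events. -/
def Combinable (A : AES E Λ) (X : Set E) : Prop :=
  A.Similar X ∧
  ∀ Y, Y ⊆ A.weakPred X → A.ConsistentSet Y →
    ∃ e ∈ X, (∀ e' ∈ Y, ¬ A.ac e e') ∧
      ∃ h ∈ A.Hist e, h \ {e} ⊆ A.strictCauses X ∪ A.causesSet Y

/-- The carrier of the folded structure: `(E \ X) ∪ {e_X}`, where the fresh
event `e_X` is encoded as `none`. -/
def foldCarrier (X : Set E) : Set (Option E) :=
  {x | x = none ∨ ∃ e, e ∉ X ∧ x = some e}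

/-- Causality of the folded structure. -/
def foldLe (A : AES E Λ) (X : Set E) : Option E → Option E → Prop
  | some e, some e' => e ∉ X ∧ e' ∉ X ∧ A.le e e'
  | some e, none => e ∈ A.strictCauses X
  | none, some e => e ∉ X ∧ ∃ e' ∈ X, A.lt e' e
  | none, none => True

/-- Asymmetric conflict of the folded structure. -/
def foldAc (A : AES E Λ) (X : Set E) : Option E → Option E → Prop
  | some e, some e' => e ∉ X ∧ e' ∉ X ∧ A.ac e e'
  | some e', none => e' ∉ X ∧ ∀ e ∈ X, A.ac e' e
  | none, some e' => e' ∉ X ∧ ∀ e ∈ X, A.ac e e'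
  | none, none => False

open Classical in
/-- Labelling of the folded structure. -/
noncomputable def foldLab [Inhabited Λ] (A : AES E Λ) (X : Set E) : Option E → Λ
  | some e => A.lab e
  | none => if h : X.Nonempty then A.lab h.some else default

open Classical in
/-- The folding morphism `f : E → E/X`. -/
noncomputable def foldMap (X : Set E) : E → Option E :=
  fun e => if e ∈ X then none else some e

end AES

/-! A chain is lifted from its last element backwards. The last element needs just some
preimage; for the fresh event `e_X` one exists because a combinable set is nonempty (apply
combinability to `Y = ∅`). Each step `x ≤/X f(b)` is then witnessed by a preimage of `x` below `b`:
`b` itself, a cause of `b` in `X`, or `x` itself, according to the case of `≤/X`. -/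

theorem Fin.exists_lift_of_chain {α β : Type*} {r : α → α → Prop} {s : β → β → Prop}
    {f : α → β} {S : Set β} (hsurj : ∀ y ∈ S, ∃ a, f a = y)
    (hlift : ∀ x ∈ S, ∀ b, s x (f b) → ∃ a, r a b ∧ f a = x) :
    ∀ (k : ℕ) (xs : Fin (k + 1) → β), (∀ i, xs i ∈ S) →
      (∀ i : Fin k, s (xs i.castSucc) (xs i.succ)) →
      ∃ es : Fin (k + 1) → α, (∀ i : Fin k, r (es i.castSucc) (es i.succ)) ∧
        ∀ i, f (es i) = xs i
  | 0, xs, hmem, _ => by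
    obtain ⟨a, ha⟩ := hsurj (xs 0) (hmem 0)
    exact ⟨fun _ => a, fun i => i.elim0, fun i => by rw [Fin.fin_one_eq_zero i, ha]⟩
  | k + 1, xs, hmem, hchain => by
    obtain ⟨es, hes, hfes⟩ := exists_lift_of_chain hsurj hlift k (Fin.tail xs)
      (fun i => hmem i.succ) (fun i => by simpa [Fin.tail] using hchain i.succ)
    obtain ⟨a, hra, hfa⟩ := hlift (xs 0) (hmem 0) (es 0) (by rw [hfes 0]; exact hchain 0)
    refine ⟨Fin.cons a es, Fin.cases (by simpa using hra) fun i => ?_, Fin.cases hfa hfes⟩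
    simpa [← Fin.succ_castSucc] using hes i

namespace AES

variable {E Λ : Type*}

theorem Combinable.nonempty {A : AES E Λ} {X : Set E} (hX : A.Combinable X) : X.Nonempty :=
  let ⟨e, he, _⟩ := hX.2 ∅ (Set.empty_subset _) (fun _ he => he.elim)
  ⟨e, he⟩

theorem foldMap_of_mem {X : Set E} {e : E} (he : e ∈ X) : foldMap X e = none := by
  simp [foldMap, he]

theorem foldMap_of_notMem {X : Set E} {e : E} (he : e ∉ X) : foldMap X e = some e := by
  simp [foldMap, he]

theorem exists_foldMap_eq {X : Set E} (hX : X.Nonempty) {x : Option E}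
    (hx : x ∈ foldCarrier X) : ∃ e, foldMap X e = x := by
  obtain rfl | ⟨e, he, rfl⟩ := hx
  · exact ⟨hX.some, foldMap_of_mem hX.some_mem⟩
  · exact ⟨e, foldMap_of_notMem he⟩

theorem exists_le_foldMap_eq_of_foldLe {A : AES E Λ} (hA : A.IsAES) {X : Set E}
    {x : Option E} (hx : x ∈ foldCarrier X) {b : E} (h : A.foldLe X x (foldMap X b)) :
    ∃ e, A.le e b ∧ foldMap X e = x := by
  by_cases hb : b ∈ X
  · rw [foldMap_of_mem hb] at h
    obtain rfl | ⟨a, ha, rfl⟩ := hx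
    · exact ⟨b, hA.le_refl b, foldMap_of_mem hb⟩
    · exact ⟨a, (h b hb).1, foldMap_of_notMem ha⟩
  · rw [foldMap_of_notMem hb] at h
    obtain rfl | ⟨a, ha, rfl⟩ := hx
    · obtain ⟨-, e, he, hlt⟩ := h
      exact ⟨e, hlt.1, foldMap_of_mem he⟩
    · exact ⟨a, h.2.2, foldMap_of_notMem ha⟩

end AES

open AES in
/-- causal chains in the folded AES are reflected by the folding
morphism: every `≤/X`-chain `x₁ ≤/X … ≤/X x_k` in `E/X` is the image of a
`≤`-chain `e₁ ≤ … ≤ e_k` in `E`. -/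
theorem aes_folding_reflects_causal_chains
    {E Λ : Type*} (A : AES E Λ) (hA : A.IsAES) (X : Set E) (hX : A.Combinable X)
    (k : ℕ) (xs : Fin (k + 1) → Option E)
    (hmem : ∀ i, xs i ∈ foldCarrier X)
    (hchain : ∀ i : Fin k, A.foldLe X (xs i.castSucc) (xs i.succ)) :
    ∃ es : Fin (k + 1) → E,
      (∀ i : Fin k, A.le (es i.castSucc) (es i.succ)) ∧
      (∀ i, foldMap X (es i) = xs i) :=
  Fin.exists_lift_of_chain (fun _ hy => exists_foldMap_eq hX.nonempty hy)
    (fun _ hx _ h => exists_le_foldMap_eq_of_foldLe hA hx h) k xs hmem hchain
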